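/- Let E ∈ ℝ² with E ≠ 0, let R, X ∈ ℝ with R ≠ 0 and X ≠ 0, let Imax > 0, let M₁ ≠ M₂ be two distinct matrices from {M_P, M_Q, M_V}, and let s₁, s₂ ∈ ℝ be such that the slice 𝒲(s₁,s₂) := { W ∈ 𝒲 : Tr(M₁ W) = s₁ and Tr(M₂ W) = s₂ } is nonempty. Then every minimizer of the trace functional W ↦ Tr(W) over 𝒲(s₁,s₂) has rank at most 1. -/

import Mathlib

/-- The matrix `J` with rows `(0,1)` and `(-1,0)`. -/
def Jmat : Matrix (Fin 2) (Fin 2) ℝ := !![0, 1; -1, 0]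

/-- The impedance matrix `Z` with rows `(R,-X)` and `(X,R)`. -/
def Zmat (R X : ℝ) : Matrix (Fin 2) (Fin 2) ℝ := !![R, -X; X, R]

/-- Interpret a plain vector `Fin 2 → ℝ` as an element of Euclidean space `ℝ²`. -/
noncomputable def toE (v : Fin 2 → ℝ) : EuclideanSpace ℝ (Fin 2) := WithLp.toLp 2 v

/-- The vector `J E ∈ ℝ²`. -/
noncomputable def Jv (E : EuclideanSpace ℝ (Fin 2)) : EuclideanSpace ℝ (Fin 2) :=
  toE (Jmat.mulVec (fun i => E i))

/-- The vector `Zᵀ E ∈ ℝ²`. -/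
noncomputable def ZtE (R X : ℝ) (E : EuclideanSpace ℝ (Fin 2)) : EuclideanSpace ℝ (Fin 2) :=
  toE ((Zmat R X).transpose.mulVec (fun i => E i))

/-- `M(α, a, ζ)`: the 3×3 symmetric matrix with top-left 2×2 block `α·I₂`,
top-right column `a/2`, bottom-left row `aᵀ/2`, and bottom-right entry `ζ`. -/
noncomputable def Mmat (α : ℝ) (a : EuclideanSpace ℝ (Fin 2)) (ζ : ℝ) :
    Matrix (Fin 3) (Fin 3) ℝ :=
  !![α, 0, a 0 / 2; 0, α, a 1 / 2; a 0 / 2, a 1 / 2, ζ]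

/-- `M_P := M(3R/2, (3/2)E, 0)`. -/
noncomputable def MP (E : EuclideanSpace ℝ (Fin 2)) (R : ℝ) : Matrix (Fin 3) (Fin 3) ℝ :=
  Mmat (3 * R / 2) ((3 / 2 : ℝ) • E) 0

/-- `M_Q := M(3X/2, (3/2)JE, 0)`. -/
noncomputable def MQ (E : EuclideanSpace ℝ (Fin 2)) (X : ℝ) : Matrix (Fin 3) (Fin 3) ℝ :=
  Mmat (3 * X / 2) ((3 / 2 : ℝ) • Jv E) 0

/-- `M_V := M(R² + X², 2ZᵀE, ‖E‖²)`. -/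
noncomputable def MV (E : EuclideanSpace ℝ (Fin 2)) (R X : ℝ) : Matrix (Fin 3) (Fin 3) ℝ :=
  Mmat (R ^ 2 + X ^ 2) ((2 : ℝ) • ZtE R X E) (‖E‖ ^ 2)

/-- The SDP feasible set `𝒲`. -/
def Wset (Imax : ℝ) : Set (Matrix (Fin 3) (Fin 3) ℝ) :=
  {W | W.PosSemidef ∧ W 0 0 + W 1 1 ≤ Imax ^ 2 ∧ W 2 2 = 1}

/-!
Write `W = [[A, w], [wᵀ, 1]]`. The objective and both constraints see `W` only through `tr A`
and `w`, and positive semidefiniteness forces `tr A ≥ ‖w‖²` (Schur complement). Since the linear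
parts `a₁, a₂` of `M₁, M₂` are independent, there is `u` with `aᵢ ⬝ u = αᵢ`; moving `w` to
`w + ε u` while lowering `tr A` by `ε` keeps both constraints. If `tr A > ‖w‖²`, such a step with
small `ε > 0` stays feasible and lowers the trace. So at a minimizer `tr A = ‖w‖²`, the PSD
matrix `W - (w, 1)(w, 1)ᵀ` has zero trace, and `W = (w, 1)(w, 1)ᵀ`.
-/

open Matrix Filter Topology

section Schur

variable {n : Type*} [Fintype n] [DecidableEq n] {W : Matrix n n ℝ} {k : n}

theorem Matrix.PosSemidef.sub_vecMulVec_col (hW : W.PosSemidef) (hk : W k k = 1) :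
    (W - vecMulVec (W.col k) (W.col k)).PosSemidef := by
  have hrow : W.row k = W.col k := funext fun j => by simpa using hW.1.apply j k
  refine .of_dotProduct_mulVec_nonneg ?_ fun x => ?_
  · simpa using hW.1.sub (posSemidef_vecMulVec_self_star (W.col k)).1
  · set t := W.col k ⬝ᵥ x
    -- `x ⬝ (W - c cᵀ) x = (x - t eₖ) ⬝ W (x - t eₖ)` with `c = W.col k`, `t = c ⬝ x`
    have := hW.dotProduct_mulVec_nonneg (x - t • Pi.single k 1)
    simp only [star_trivial, mulVec_sub, mulVec_smul, mulVec_single_one, dotProduct_sub,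
      sub_dotProduct, dotProduct_smul, smul_dotProduct, sub_mulVec, vecMulVec_mulVec] at this ⊢
    rw [dotProduct_mulVec (Pi.single k 1), single_one_vecMul, hrow] at this
    simp only [dotProduct_comm x, smul_eq_mul, single_dotProduct, col_apply, hk, mul_one,
      MulOpposite.smul_eq_mul_unop, MulOpposite.unop_op, t] at this ⊢
    linarith

theorem Matrix.PosSemidef.eq_vecMulVec_col_of_trace_le (hW : W.PosSemidef) (hk : W k k = 1)
    (htr : W.trace ≤ W.col k ⬝ᵥ W.col k) : W = vecMulVec (W.col k) (W.col k) := by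
  have hS := hW.sub_vecMulVec_col hk
  have htr0 : (W - vecMulVec (W.col k) (W.col k)).trace = 0 := by
    refine le_antisymm ?_ hS.trace_nonneg
    rw [trace_sub, trace_vecMulVec]
    linarith
  exact sub_eq_zero.mp (hS.trace_eq_zero_iff.mp htr0)

end Schur

def cross (a b : EuclideanSpace ℝ (Fin 2)) : ℝ := a 0 * b 1 - a 1 * b 0

theorem cross_smul_smul (c d : ℝ) (a b : EuclideanSpace ℝ (Fin 2)) :
    cross (c • a) (d • b) = c * d * cross a b := by
  simp only [cross, PiLp.smul_apply, smul_eq_mul]; ring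

theorem cross_Jv (E : EuclideanSpace ℝ (Fin 2)) : cross E (Jv E) = -‖E‖ ^ 2 := by
  simp [cross, Jv, toE, Jmat, dotProduct, EuclideanSpace.real_norm_sq_eq]; ring

theorem cross_ZtE (E : EuclideanSpace ℝ (Fin 2)) (R X : ℝ) :
    cross E (ZtE R X E) = -X * ‖E‖ ^ 2 := by
  simp [cross, ZtE, toE, Zmat, EuclideanSpace.real_norm_sq_eq]; ring

theorem cross_Jv_ZtE (E : EuclideanSpace ℝ (Fin 2)) (R X : ℝ) :
    cross (Jv E) (ZtE R X E) = R * ‖E‖ ^ 2 := by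
  simp [cross, Jv, ZtE, toE, Jmat, Zmat, dotProduct, EuclideanSpace.real_norm_sq_eq]; ring

theorem exists_solution_of_cross_ne_zero {a b : EuclideanSpace ℝ (Fin 2)} (h : cross a b ≠ 0)
    (α β : ℝ) : ∃ u₀ u₁ : ℝ, a 0 * u₀ + a 1 * u₁ = α ∧ b 0 * u₀ + b 1 * u₁ = β := by
  refine ⟨(α * b 1 - β * a 1) / cross a b, (β * a 0 - α * b 0) / cross a b, ?_, ?_⟩ <;>
    · field_simp; unfold cross; ring

theorem exists_eq_Mmat_of_mem_of_ne {E : EuclideanSpace ℝ (Fin 2)} (hE : E ≠ 0) {R X : ℝ}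
    (hR : R ≠ 0) (hX : X ≠ 0) {M₁ M₂ : Matrix (Fin 3) (Fin 3) ℝ}
    (hM₁ : M₁ ∈ ({MP E R, MQ E X, MV E R X} : Set (Matrix (Fin 3) (Fin 3) ℝ)))
    (hM₂ : M₂ ∈ ({MP E R, MQ E X, MV E R X} : Set (Matrix (Fin 3) (Fin 3) ℝ)))
    (hMne : M₁ ≠ M₂) :
    ∃ α₁ a₁ ζ₁ α₂ a₂ ζ₂, M₁ = Mmat α₁ a₁ ζ₁ ∧ M₂ = Mmat α₂ a₂ ζ₂ ∧ cross a₁ a₂ ≠ 0 := by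
  have hE2 : ‖E‖ ^ 2 ≠ 0 := pow_ne_zero 2 (norm_ne_zero_iff.mpr hE)
  have hPQ : cross ((3 / 2 : ℝ) • E) ((3 / 2 : ℝ) • Jv E) ≠ 0 := by
    rw [cross_smul_smul, cross_Jv]; simpa using hE2
  have hPV : cross ((3 / 2 : ℝ) • E) ((2 : ℝ) • ZtE R X E) ≠ 0 := by
    rw [cross_smul_smul, cross_ZtE]; simp [hX, hE2]
  have hQV : cross ((3 / 2 : ℝ) • Jv E) ((2 : ℝ) • ZtE R X E) ≠ 0 := by
    rw [cross_smul_smul, cross_Jv_ZtE]; simp [hR, hE2]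
  have swap {a b : EuclideanSpace ℝ (Fin 2)} (h : cross a b ≠ 0) : cross b a ≠ 0 := by
    unfold cross at h ⊢; contrapose! h; linarith
  simp only [Set.mem_insert_iff, Set.mem_singleton_iff] at hM₁ hM₂
  rcases hM₁ with rfl | rfl | rfl <;> rcases hM₂ with rfl | rfl | rfl <;>
    first
    | exact absurd rfl hMne
    | exact ⟨_, _, _, _, _, _, rfl, rfl, by assumption⟩
    | exact ⟨_, _, _, _, _, _, rfl, rfl, swap (by assumption)⟩

theorem trace_Mmat_mul (α : ℝ) (a : EuclideanSpace ℝ (Fin 2)) (ζ : ℝ)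
    {W : Matrix (Fin 3) (Fin 3) ℝ} (hW : W.IsHermitian) :
    (Mmat α a ζ * W).trace = α * (W 0 0 + W 1 1) + a 0 * W 0 2 + a 1 * W 1 2 + ζ * W 2 2 := by
  have h₀ : W 2 0 = W 0 2 := by simpa using hW.apply 0 2
  have h₁ : W 2 1 = W 1 2 := by simpa using hW.apply 1 2
  simp [Matrix.trace, Fin.sum_univ_three, Mmat, vecMul, dotProduct, h₀, h₁]
  ring

noncomputable def liftW (p q κ : ℝ) : Matrix (Fin 3) (Fin 3) ℝ :=
  vecMulVec ![p, q, 1] ![p, q, 1] + κ • diagonal ![1, 1, 0]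

section liftW

variable (p q : ℝ) {κ : ℝ}

theorem posSemidef_liftW (hκ : 0 ≤ κ) : (liftW p q κ).PosSemidef := by
  refine (posSemidef_vecMulVec_self_star _).add (.smul (.diagonal fun i => ?_) hκ)
  fin_cases i <;> simp

variable (κ)

theorem liftW_two_two : liftW p q κ 2 2 = 1 := by simp [liftW]

theorem liftW_zero_zero_add_one_one :
    liftW p q κ 0 0 + liftW p q κ 1 1 = p ^ 2 + q ^ 2 + 2 * κ := by
  simp [liftW]; ring

theorem trace_liftW : (liftW p q κ).trace = p ^ 2 + q ^ 2 + 2 * κ + 1 := by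
  rw [trace_fin_three, liftW_zero_zero_add_one_one, liftW_two_two]

theorem trace_Mmat_mul_liftW (α : ℝ) (a : EuclideanSpace ℝ (Fin 2)) (ζ : ℝ) :
    (Mmat α a ζ * liftW p q κ).trace = α * (p ^ 2 + q ^ 2 + 2 * κ) + a 0 * p + a 1 * q + ζ := by
  simp [trace, Fin.sum_univ_three, Mmat, liftW, vecMul, dotProduct]
  ring

end liftW

theorem exists_pos_sq_add_sq_lt {p q t : ℝ} (h : p ^ 2 + q ^ 2 < t) (u₀ u₁ : ℝ) :
    ∃ ε > 0, (p + ε * u₀) ^ 2 + (q + ε * u₁) ^ 2 < t - ε := by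
  have hnear : ∀ᶠ ε in 𝓝 (0 : ℝ), (p + ε * u₀) ^ 2 + (q + ε * u₁) ^ 2 < t - ε :=
    ContinuousAt.eventually_lt (by fun_prop) (by fun_prop) (by simpa using h)
  exact ((hnear.filter_mono (nhdsWithin_le_nhds (s := Set.Ioi 0))).and
    self_mem_nhdsWithin).exists.imp fun ε h => ⟨h.2, h.1⟩

/-- The slice `𝒲(s₁, s₂)`. -/
def slice (Imax : ℝ) (M₁ M₂ : Matrix (Fin 3) (Fin 3) ℝ) (s₁ s₂ : ℝ) :
    Set (Matrix (Fin 3) (Fin 3) ℝ) :=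
  {W | W ∈ Wset Imax ∧ (M₁ * W).trace = s₁ ∧ (M₂ * W).trace = s₂}

section Minimizer

variable {Imax α₁ α₂ ζ₁ ζ₂ s₁ s₂ : ℝ} {a₁ a₂ : EuclideanSpace ℝ (Fin 2)}
  {W : Matrix (Fin 3) (Fin 3) ℝ}

theorem diag_add_le_of_isMinOn
    (hsolv : ∃ u₀ u₁ : ℝ, a₁ 0 * u₀ + a₁ 1 * u₁ = α₁ ∧ a₂ 0 * u₀ + a₂ 1 * u₁ = α₂)
    (hW : W ∈ slice Imax (Mmat α₁ a₁ ζ₁) (Mmat α₂ a₂ ζ₂) s₁ s₂)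
    (hmin : IsMinOn trace (slice Imax (Mmat α₁ a₁ ζ₁) (Mmat α₂ a₂ ζ₂) s₁ s₂) W) :
    W 0 0 + W 1 1 ≤ W 0 2 ^ 2 + W 1 2 ^ 2 := by
  obtain ⟨⟨hpsd, hImax, h22⟩, h₁, h₂⟩ := hW
  rw [trace_Mmat_mul _ _ _ hpsd.1, h22] at h₁ h₂
  by_contra! hlt
  obtain ⟨u₀, u₁, hu₁, hu₂⟩ := hsolv
  obtain ⟨ε, hε, hsmall⟩ := exists_pos_sq_add_sq_lt hlt u₀ u₁
  set p := W 0 2 + ε * u₀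
  set q := W 1 2 + ε * u₁
  set κ := (W 0 0 + W 1 1 - ε - p ^ 2 - q ^ 2) / 2
  have hsum : p ^ 2 + q ^ 2 + 2 * κ = W 0 0 + W 1 1 - ε := by ring
  have hW' : liftW p q κ ∈ slice Imax (Mmat α₁ a₁ ζ₁) (Mmat α₂ a₂ ζ₂) s₁ s₂ := by
    refine ⟨⟨posSemidef_liftW p q (by linarith), ?_, liftW_two_two p q κ⟩, ?_, ?_⟩
    · rw [liftW_zero_zero_add_one_one, hsum]; linarith
    · rw [trace_Mmat_mul_liftW, hsum]; linear_combination h₁ + ε * hu₁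
    · rw [trace_Mmat_mul_liftW, hsum]; linear_combination h₂ + ε * hu₂
  have htrace : W.trace ≤ (liftW p q κ).trace := isMinOn_iff.mp hmin _ hW'
  rw [trace_liftW, hsum, trace_fin_three, h22] at htrace
  linarith

theorem rank_le_one_of_isMinOn
    (hsolv : ∃ u₀ u₁ : ℝ, a₁ 0 * u₀ + a₁ 1 * u₁ = α₁ ∧ a₂ 0 * u₀ + a₂ 1 * u₁ = α₂)
    (hW : W ∈ slice Imax (Mmat α₁ a₁ ζ₁) (Mmat α₂ a₂ ζ₂) s₁ s₂)
    (hmin : IsMinOn trace (slice Imax (Mmat α₁ a₁ ζ₁) (Mmat α₂ a₂ ζ₂) s₁ s₂) W) :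
    W.rank ≤ 1 := by
  have hdiag := diag_add_le_of_isMinOn hsolv hW hmin
  obtain ⟨⟨hpsd, -, h22⟩, -⟩ := hW
  have htr : W.trace ≤ W.col 2 ⬝ᵥ W.col 2 := by
    simp only [trace_fin_three, dotProduct, Fin.sum_univ_three, col_apply, h22]
    linarith
  rw [hpsd.eq_vecMulVec_col_of_trace_le h22 htr]
  exact rank_vecMulVec_le _ _

end Minimizer

theorem stmt14_general (E : EuclideanSpace ℝ (Fin 2)) (hE : E ≠ 0) (R X : ℝ)
    (hR : R ≠ 0) (hX : X ≠ 0) (Imax : ℝ)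
    (M₁ M₂ : Matrix (Fin 3) (Fin 3) ℝ)
    (hM₁ : M₁ ∈ ({MP E R, MQ E X, MV E R X} : Set (Matrix (Fin 3) (Fin 3) ℝ)))
    (hM₂ : M₂ ∈ ({MP E R, MQ E X, MV E R X} : Set (Matrix (Fin 3) (Fin 3) ℝ)))
    (hMne : M₁ ≠ M₂)
    (s₁ s₂ : ℝ)
    (Wstar : Matrix (Fin 3) (Fin 3) ℝ)
    (hWstar : Wstar ∈ Wset Imax ∧ (M₁ * Wstar).trace = s₁ ∧ (M₂ * Wstar).trace = s₂)
    (hmin : ∀ W ∈ Wset Imax, (M₁ * W).trace = s₁ → (M₂ * W).trace = s₂ →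
      Wstar.trace ≤ W.trace) :
    Wstar.rank ≤ 1 := by
  obtain ⟨α₁, a₁, ζ₁, α₂, a₂, ζ₂, rfl, rfl, hcross⟩ :=
    exists_eq_Mmat_of_mem_of_ne hE hR hX hM₁ hM₂ hMne
  exact rank_le_one_of_isMinOn (exists_solution_of_cross_ne_zero hcross α₁ α₂) hWstar
    fun W hW => hmin W hW.1 hW.2.1 hW.2.2

/-- every minimizer of the trace over the nonempty slice
`𝒲(s₁,s₂) = {W ∈ 𝒲 : Tr(M₁W) = s₁, Tr(M₂W) = s₂}` has rank at most 1. -/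
theorem stmt14 (E : EuclideanSpace ℝ (Fin 2)) (hE : E ≠ 0) (R X : ℝ)
    (hR : R ≠ 0) (hX : X ≠ 0) (Imax : ℝ) (hI : 0 < Imax)
    (M₁ M₂ : Matrix (Fin 3) (Fin 3) ℝ)
    (hM₁ : M₁ ∈ ({MP E R, MQ E X, MV E R X} : Set (Matrix (Fin 3) (Fin 3) ℝ)))
    (hM₂ : M₂ ∈ ({MP E R, MQ E X, MV E R X} : Set (Matrix (Fin 3) (Fin 3) ℝ)))
    (hMne : M₁ ≠ M₂)
    (s₁ s₂ : ℝ)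
    (hne : ∃ W ∈ Wset Imax, (M₁ * W).trace = s₁ ∧ (M₂ * W).trace = s₂)
    (Wstar : Matrix (Fin 3) (Fin 3) ℝ)
    (hWstar : Wstar ∈ Wset Imax ∧ (M₁ * Wstar).trace = s₁ ∧ (M₂ * Wstar).trace = s₂)
    (hmin : ∀ W ∈ Wset Imax, (M₁ * W).trace = s₁ → (M₂ * W).trace = s₂ →
      Wstar.trace ≤ W.trace) :
    Wstar.rank ≤ 1 :=
  stmt14_general E hE R X hR hX Imax M₁ M₂ hM₁ hM₂ hMne s₁ s₂ Wstar hWstar hmin
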